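/- For any set T of arcs in the infinite strip, the set nc(T) of all arcs that cross no arc of T is a Ptolemy diagram: for any two crossing arcs [p,q] and [i,j] in nc(T), each of [p,i], [p,j], [q,i], [q,j] that is an arc belongs to nc(T). -/
import Mathlib


/-- A marked point of the infinite strip `B∞`: an upper point `ℓ i` or a lower point `r j`. -/
inductive MPoint : Type
  | up : ℤ → MPoint
  | low : ℤ → MPoint
deriving DecidableEq

namespace Strip

open MPoint

/-- A curve is an unordered pair of marked points. -/
abbrev Curve := Sym2 MPoint

/-- Edges of the strip: `{ℓ_i, ℓ_{i+1}}` or `{r_i, r_{i+1}}`. -/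
def IsEdge (c : Curve) : Prop :=
  ∃ i : ℤ, c = s(up i, up (i + 1)) ∨ c = s(low i, low (i + 1))

/-- Arcs: non-degenerate, non-edge unordered pairs of marked points. -/
def IsArc (c : Curve) : Prop := ¬ c.IsDiag ∧ ¬ IsEdge c

/-- A connecting arc joins an upper and a lower marked point. -/
def IsConnecting (c : Curve) : Prop := ∃ i j : ℤ, c = s(up i, low j)

/-- The crossing relation on curves of the strip, given by the explicit index
conditions of Liu–Paquette (cases according to the type of `u`). -/
def Crosses (u v : Curve) : Prop :=
  (∃ i j p q : ℤ, ((i < p ∧ p < j ∧ j < q) ∨ (p < i ∧ i < q ∧ q < j)) ∧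
      u = s(up i, up j) ∧ v = s(up p, up q)) ∨
  (∃ i j p q : ℤ, (i < p ∧ p < j) ∧ u = s(up i, up j) ∧ v = s(up p, low q)) ∨
  (∃ i j p q : ℤ, ((i > p ∧ p > j ∧ j > q) ∨ (p > i ∧ i > q ∧ q > j)) ∧
      u = s(low i, low j) ∧ v = s(low p, low q)) ∨
  (∃ i j p q : ℤ, (i > q ∧ q > j) ∧ u = s(low i, low j) ∧ v = s(up p, low q)) ∨
  (∃ i j p q : ℤ, (p < i ∧ i < q) ∧ u = s(up i, low j) ∧ v = s(up p, up q)) ∨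
  (∃ i j p q : ℤ, (p > j ∧ j > q) ∧ u = s(up i, low j) ∧ v = s(low p, low q)) ∨
  (∃ i j p q : ℤ, ((i > p ∧ j > q) ∨ (i < p ∧ j < q)) ∧
      u = s(up i, low j) ∧ v = s(up p, low q))

/-- The translation `τ` on marked points, shifting indices by `+1`. -/
def tauP : MPoint → MPoint
  | up i => up (i + 1)
  | low i => low (i + 1)

/-- The inverse translation `τ⁻¹` on marked points. -/
def tauInvP : MPoint → MPoint
  | up i => up (i - 1)
  | low i => low (i - 1)

/-- The translation `τ` on curves. -/
def tau (c : Curve) : Curve := c.map tauP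

/-- The inverse translation `τ⁻¹` on curves. -/
def tauInv (c : Curve) : Curve := c.map tauInvP

/-- `key p q` is the position of the curve `[p,q]` in the clockwise linear order `>_p`
on the set `[p,−]` of curves at `p`, valued in `ℤ ×ₗ ℤ` (lexicographic order).
For `p = ℓ_P`: curves to upper points right of `p` (tier 2, increasing with index),
then connecting curves (tier 1, decreasing with index),
then curves to upper points left of `p` (tier 0, decreasing with index); dually for lower `p`. -/
def key : MPoint → MPoint → ℤ ×ₗ ℤ
  | up P, up e => if P < e then toLex (2, e) else toLex (0, -e)
  | up _, low c => toLex (1, -c)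
  | low P, low e => if P < e then toLex (2, e) else toLex (0, -e)
  | low _, up c => toLex (1, -c)

/-- `GtAt p u v` means `u >_p v`: `u` and `v` are curves sharing the endpoint `p`
and `u` is bigger than `v` in the clockwise linear order at `p`. -/
def GtAt (p : MPoint) (u v : Curve) : Prop :=
  ∃ x y : MPoint, x ≠ p ∧ y ≠ p ∧ u = s(p, x) ∧ v = s(p, y) ∧ key p y < key p x

/-- `u₃` is a middle term from `u₂` to `u₁`: a curve (arc or edge) with
`u₂ <_{p₁} u₃ <_{p₂} u₁` for some marked points `p₁`, `p₂`. -/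
def IsMiddleTerm (u₂ u₁ u₃ : Curve) : Prop :=
  ¬ u₃.IsDiag ∧ ∃ p₁ p₂ : MPoint, GtAt p₁ u₃ u₂ ∧ GtAt p₂ u₁ u₃

/-- `nc T`: the set of arcs crossing no arc of `T`. -/
def nc (T : Set Curve) : Set Curve :=
  {u | IsArc u ∧ ∀ v ∈ T, ¬ Crosses u v}

/-- `T` is a Ptolemy diagram: a set of arcs such that for any two crossing arcs
`[p,q],[i,j] ∈ T`, those of `[p,i],[p,j],[q,i],[q,j]` which are arcs lie in `T`. -/
def IsPtolemy (T : Set Curve) : Prop :=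
  (∀ u ∈ T, IsArc u) ∧
  ∀ p q i j : MPoint, s(p, q) ∈ T → s(i, j) ∈ T → Crosses s(p, q) s(i, j) →
    (IsArc s(p, i) → s(p, i) ∈ T) ∧ (IsArc s(p, j) → s(p, j) ∈ T) ∧
    (IsArc s(q, i) → s(q, i) ∈ T) ∧ (IsArc s(q, j) → s(q, j) ∈ T)

/-- `T_u`: the set of arcs of `T` crossing `u`. -/
def crossSet (T : Set Curve) (u : Curve) : Set Curve := {v ∈ T | Crosses v u}

/-- `p` is upper left `T`-bounded: `[p, ℓ_i] ∉ T` for all sufficiently small `i`. -/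
def UpperLeftBounded (T : Set Curve) (p : MPoint) : Prop :=
  ∃ j : ℤ, ∀ i : ℤ, i < j → s(p, up i) ∉ T

/-- `p` is upper right `T`-bounded: `[p, ℓ_i] ∉ T` for all sufficiently large `i`. -/
def UpperRightBounded (T : Set Curve) (p : MPoint) : Prop :=
  ∃ j : ℤ, ∀ i : ℤ, i > j → s(p, up i) ∉ T

/-- `p` is lower left `T`-bounded: `[p, r_i] ∉ T` for all sufficiently large `i`. -/
def LowerLeftBounded (T : Set Curve) (p : MPoint) : Prop :=
  ∃ j : ℤ, ∀ i : ℤ, i > j → s(p, low i) ∉ T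

/-- `p` is lower right `T`-bounded: `[p, r_i] ∉ T` for all sufficiently small `i`. -/
def LowerRightBounded (T : Set Curve) (p : MPoint) : Prop :=
  ∃ j : ℤ, ∀ i : ℤ, i < j → s(p, low i) ∉ T

/-- Condition (B): every lower right `T`-bounded marked point is upper right
`T`-bounded, and every upper left `T`-bounded marked point is lower left `T`-bounded. -/
def CondB (T : Set Curve) : Prop :=
  ∀ p : MPoint, (LowerRightBounded T p → UpperRightBounded T p) ∧
    (UpperLeftBounded T p → LowerLeftBounded T p)

/-- Condition (B'): the dual of condition (B). -/
def CondB' (T : Set Curve) : Prop :=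
  ∀ p : MPoint, (LowerLeftBounded T p → UpperLeftBounded T p) ∧
    (UpperRightBounded T p → LowerRightBounded T p)

/-- Condition (C): `T ∪ nc T` contains a connecting arc. -/
def CondC (T : Set Curve) : Prop := ∃ c ∈ T ∪ nc T, IsConnecting c

/-- `S0` is a τ-basis of `Ω`: a subset of `Ω` such that for every `u₁ ∈ Ω` there is
`u₂ ∈ S0` with `τ u₂` crossing `u₁`, and all middle terms from `u₂` to `u₁` lie in `Ω`
whenever `u₂` crosses `u₁`. -/
def IsTauBasis (Ω S0 : Set Curve) : Prop :=
  S0 ⊆ Ω ∧ ∀ u₁ ∈ Ω, ∃ u₂ ∈ S0, Crosses (tau u₂) u₁ ∧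
    (Crosses u₂ u₁ → ∀ u₃ : Curve, IsMiddleTerm u₂ u₁ u₃ → u₃ ∈ Ω)

/-- `T` is τ-compact: for every arc `u`, the set `T_u` admits a finite τ-basis. -/
def TauCompact (T : Set Curve) : Prop :=
  ∀ u : Curve, IsArc u → ∃ S0 : Set Curve, S0.Finite ∧ IsTauBasis (crossSet T u) S0

/-- `T̄`: the set `T` together with all edges of the strip. -/
def withEdges (T : Set Curve) : Set Curve := T ∪ {c | IsEdge c}

/-- Explicit crossing predicate on (ordered representatives of) pairs of points,
in a compact min/max form. -/
def Cr2 : MPoint → MPoint → MPoint → MPoint → Prop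
  | up a, up b, up c, up d =>
      (min a b < min c d ∧ min c d < max a b ∧ max a b < max c d) ∨
      (min c d < min a b ∧ min a b < max c d ∧ max c d < max a b)
  | up a, up b, up c, low _ => min a b < c ∧ c < max a b
  | up a, up b, low _, up d => min a b < d ∧ d < max a b
  | up _, up _, low _, low _ => False
  | up a, low _, up c, up d => min c d < a ∧ a < max c d
  | up a, low b, up c, low d => (a < c ∧ b < d) ∨ (c < a ∧ d < b)
  | up a, low b, low c, up d => (a < d ∧ b < c) ∨ (d < a ∧ c < b)
  | up _, low b, low c, low d => min c d < b ∧ b < max c d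
  | low _, up b, up c, up d => min c d < b ∧ b < max c d
  | low a, up b, up c, low d => (b < c ∧ a < d) ∨ (c < b ∧ d < a)
  | low a, up b, low c, up d => (b < d ∧ a < c) ∨ (d < b ∧ c < a)
  | low a, up _, low c, low d => min c d < a ∧ a < max c d
  | low _, low _, up _, up _ => False
  | low a, low b, up _, low d => min a b < d ∧ d < max a b
  | low a, low b, low c, up _ => min a b < c ∧ c < max a b
  | low a, low b, low c, low d =>
      (min a b < min c d ∧ min c d < max a b ∧ max a b < max c d) ∨
      (min c d < min a b ∧ min a b < max c d ∧ max c d < max a b)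

lemma up_mm (a b : ℤ) : s(up a, up b) = s(up (min a b), up (max a b)) := by
  rcases le_total a b with h|h
  · rw [min_eq_left h, max_eq_right h]
  · rw [min_eq_right h, max_eq_left h]; exact Sym2.eq_swap

lemma low_mm (a b : ℤ) : s(low a, low b) = s(low (max a b), low (min a b)) := by
  rcases le_total a b with h|h
  · rw [min_eq_left h, max_eq_right h]; exact Sym2.eq_swap
  · rw [min_eq_right h, max_eq_left h]

set_option maxHeartbeats 1000000 in
lemma crosses_iff (a b c d : MPoint) : Crosses s(a,b) s(c,d) ↔ Cr2 a b c d := by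
  constructor
  · rintro (⟨i,j,p,q,hc,h1,h2⟩|⟨i,j,p,q,hc,h1,h2⟩|⟨i,j,p,q,hc,h1,h2⟩|⟨i,j,p,q,hc,h1,h2⟩|
      ⟨i,j,p,q,hc,h1,h2⟩|⟨i,j,p,q,hc,h1,h2⟩|⟨i,j,p,q,hc,h1,h2⟩) <;>
    · rw [Sym2.eq_iff] at h1 h2
      rcases h1 with ⟨rfl,rfl⟩|⟨rfl,rfl⟩ <;> rcases h2 with ⟨rfl,rfl⟩|⟨rfl,rfl⟩ <;>
        simp only [Cr2] <;> omega
  · cases a with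
    | up a => cases b with
      | up b => cases c with
        | up c => cases d with
          | up d =>
            intro h
            exact Or.inl ⟨min a b, max a b, min c d, max c d, by
              simp only [Cr2] at h; omega, up_mm a b, up_mm c d⟩
          | low d =>
            intro h
            exact Or.inr (Or.inl ⟨min a b, max a b, c, d, by
              simp only [Cr2] at h; omega, up_mm a b, rfl⟩)
        | low c => cases d with
          | up d =>
            intro h
            exact Or.inr (Or.inl ⟨min a b, max a b, d, c, by
              simp only [Cr2] at h; omega, up_mm a b, Sym2.eq_swap⟩)
          | low d => exact fun h => h.elim
      | low b => cases c with
        | up c => cases d with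
          | up d =>
            intro h
            exact Or.inr (Or.inr (Or.inr (Or.inr (Or.inl ⟨a, b, min c d, max c d, by
              simp only [Cr2] at h; omega, rfl, up_mm c d⟩))))
          | low d =>
            intro h
            exact Or.inr (Or.inr (Or.inr (Or.inr (Or.inr (Or.inr ⟨a,b,c,d, by
              simp only [Cr2] at h; omega, rfl, rfl⟩)))))
        | low c => cases d with
          | up d =>
            intro h
            exact Or.inr (Or.inr (Or.inr (Or.inr (Or.inr (Or.inr ⟨a,b,d,c, by
              simp only [Cr2] at h; omega, rfl, Sym2.eq_swap⟩)))))
          | low d =>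
            intro h
            exact Or.inr (Or.inr (Or.inr (Or.inr (Or.inr (Or.inl
              ⟨a, b, max c d, min c d, by
                simp only [Cr2] at h; omega, rfl, low_mm c d⟩)))))
    | low a => cases b with
      | up b => cases c with
        | up c => cases d with
          | up d =>
            intro h
            exact Or.inr (Or.inr (Or.inr (Or.inr (Or.inl ⟨b, a, min c d, max c d, by
              simp only [Cr2] at h; omega, Sym2.eq_swap, up_mm c d⟩))))
          | low d =>
            intro h
            exact Or.inr (Or.inr (Or.inr (Or.inr (Or.inr (Or.inr ⟨b,a,c,d, by
              simp only [Cr2] at h; omega, Sym2.eq_swap, rfl⟩)))))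
        | low c => cases d with
          | up d =>
            intro h
            exact Or.inr (Or.inr (Or.inr (Or.inr (Or.inr (Or.inr ⟨b,a,d,c, by
              simp only [Cr2] at h; omega, Sym2.eq_swap, Sym2.eq_swap⟩)))))
          | low d =>
            intro h
            exact Or.inr (Or.inr (Or.inr (Or.inr (Or.inr (Or.inl
              ⟨b, a, max c d, min c d, by
                simp only [Cr2] at h; omega, Sym2.eq_swap, low_mm c d⟩)))))
      | low b => cases c with
        | up c => cases d with
          | up d => exact fun h => h.elim
          | low d =>
            intro h
            exact Or.inr (Or.inr (Or.inr (Or.inl ⟨max a b, min a b, c, d, by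
              simp only [Cr2] at h; omega, low_mm a b, rfl⟩)))
        | low c => cases d with
          | up d =>
            intro h
            exact Or.inr (Or.inr (Or.inr (Or.inl ⟨max a b, min a b, d, c, by
              simp only [Cr2] at h; omega, low_mm a b, Sym2.eq_swap⟩)))
          | low d =>
            intro h
            exact Or.inr (Or.inr (Or.inl ⟨max a b, min a b, max c d, min c d, by
              simp only [Cr2] at h; omega, low_mm a b, low_mm c d⟩))

lemma Cr_swapL (a b c d : MPoint) : Cr2 b a c d ↔ Cr2 a b c d := by
  rw [← crosses_iff, ← crosses_iff]
  rw [show s(b,a) = s(a,b) from Sym2.eq_swap]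

lemma Cr_swapR (a b c d : MPoint) : Cr2 a b d c ↔ Cr2 a b c d := by
  rw [← crosses_iff, ← crosses_iff]
  rw [show s(d,c) = s(c,d) from Sym2.eq_swap]

set_option maxHeartbeats 2000000 in
/-- Key geometric fact: if `w = [A,B]` crosses the side `[P,I]` of a pair of
crossing curves `[P,Q]`, `[I,J]`, then `w` crosses `[P,Q]` or `[I,J]`. -/
lemma cr_key (P Q I J A B : MPoint) (h1 : Cr2 P Q I J) (h2 : Cr2 P I A B) :
    Cr2 P Q A B ∨ Cr2 I J A B := by
  rcases P with p|p <;> rcases Q with q|q <;> rcases I with i|i <;> rcases J with j|j <;>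
    rcases A with a|a <;> rcases B with b|b <;>
    simp only [Cr2] at h1 h2 ⊢ <;>
    rcases le_total p q with h3|h3 <;> rcases le_total i j with h4|h4 <;>
    rcases le_total a b with h5|h5 <;> rcases le_total p i with h6|h6 <;>
    simp only [min_eq_left, min_eq_right, max_eq_left, max_eq_right, h3, h4, h5, h6] at * <;>
    omega

lemma key_side {T : Set Curve} {p q i j : MPoint}
    (hpq : s(p,q) ∈ nc T) (hij : s(i,j) ∈ nc T) (hcr : Cr2 p q i j)
    (harc : IsArc s(p,i)) : s(p,i) ∈ nc T := by
  refine ⟨harc, ?_⟩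
  intro v hv
  induction v using Sym2.ind with
  | _ a b =>
    intro hcv
    rw [crosses_iff] at hcv
    rcases cr_key p q i j a b hcr hcv with h | h
    · exact hpq.2 _ hv ((crosses_iff p q a b).mpr h)
    · exact hij.2 _ hv ((crosses_iff i j a b).mpr h)

end Strip

open Strip in
/-- For any set `T` of arcs, the set `nc T` of arcs crossing no arc of `T`
is a Ptolemy diagram. -/
theorem nc_isPtolemy (T : Set Curve) (hT : ∀ c ∈ T, IsArc c) :
    IsPtolemy (nc T) := by
  refine ⟨fun u hu => hu.1, ?_⟩
  intro p q i j hpq hij hcr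
  rw [crosses_iff] at hcr
  have hpq' : s(q,p) ∈ nc T := by rwa [show s(q,p) = s(p,q) from Sym2.eq_swap]
  have hij' : s(j,i) ∈ nc T := by rwa [show s(j,i) = s(i,j) from Sym2.eq_swap]
  refine ⟨fun h => key_side hpq hij hcr h, fun h => ?_, fun h => ?_, fun h => ?_⟩
  · exact key_side hpq hij' ((Cr_swapR p q i j).mpr hcr) h
  · exact key_side hpq' hij ((Cr_swapL p q i j).mpr hcr) h
  · exact key_side hpq' hij' ((Cr_swapL p q j i).mpr ((Cr_swapR p q i j).mpr hcr)) h
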